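/- arXiv:1810.02810 — 7 statements merged into one kernel-verified Lean document; each statement's English description precedes it below -/
import Mathlib

section
/- Privacy of the Gaussian local randomizer (Theorem 3.1, with the sensitivity hypothesis made precise). Let d ≥ 1, r > 0, ε ∈ (0,1], δ ∈ (0,1). Let a, a' ∈ ℝ^d satisfy ‖a‖₂ ≤ r and ‖a'‖₂ ≤ r, and set σ² = 8 r² ln(2/δ) / ε² (i.e., σ = Δ·√(2 ln(2/δ))/ε with Δ = 2r ≥ ‖a − a'‖₂). Let μ be the d-fold product of one-dimensional Gaussian measures N(aᵢ, σ²) and μ' the d-fold product of N(a'ᵢ, σ²). Then for every measurable set O ⊆ ℝ^d, μ(O) ≤ e^ε · μ'(O) + δ. -/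
open MeasureTheory ProbabilityTheory
open scoped NNReal ENNReal

/-!
The privacy loss `L = log (dμ/dμ')` is a sum over coordinates of affine functions of the output,
and splitting `O` along `{L ≤ ε}` gives `μ O ≤ e^ε μ' O + μ {L > ε}`. Under `μ` the moment
generating function of `L` is `t ↦ exp ((t + t²) ‖a - a'‖² / (2σ²))`, so with `‖a - a'‖ ≤ 2r` the
Chernoff bound at `t = 2 ln (2/δ) / ε - 1/2` makes the tail at most `δ`.
-/

section PrivacyLoss

variable {α : Type*} [MeasurableSpace α] {μ ν : Measure α} {L : α → ℝ}

theorem measure_le_exp_mul_add_measure_lt [SFinite μ]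
    (hν : ν = μ.withDensity fun x ↦ ENNReal.ofReal (Real.exp (L x))) (ε : ℝ) (O : Set α) :
    ν O ≤ ENNReal.ofReal (Real.exp ε) * μ O + ν {x | ε < L x} := by
  have h_split : O ⊆ (O ∩ {x | L x ≤ ε}) ∪ {x | ε < L x} := fun x hx ↦ by
    rcases le_or_gt (L x) ε with h | h
    exacts [Or.inl ⟨hx, h⟩, Or.inr h]
  have h_low : ν (O ∩ {x | L x ≤ ε}) ≤ ENNReal.ofReal (Real.exp ε) * μ O := by
    rw [hν, withDensity_apply']
    calc ∫⁻ x in O ∩ {x | L x ≤ ε}, ENNReal.ofReal (Real.exp (L x)) ∂μ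
        ≤ ∫⁻ _ in O ∩ {x | L x ≤ ε}, ENNReal.ofReal (Real.exp ε) ∂μ :=
          setLIntegral_mono measurable_const fun x hx ↦
            ENNReal.ofReal_le_ofReal (Real.exp_le_exp.mpr hx.2)
      _ ≤ ENNReal.ofReal (Real.exp ε) * μ O := by
          rw [setLIntegral_const]
          gcongr
          exact Set.inter_subset_left
  calc ν O ≤ ν (O ∩ {x | L x ≤ ε}) + ν {x | ε < L x} :=
        (measure_mono h_split).trans (measure_union_le _ _)
    _ ≤ _ := by gcongr

theorem measure_lt_le_exp_mul_lintegral_exp (hL : Measurable L) {t : ℝ} (ht : 0 ≤ t) (ε : ℝ) :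
    μ {x | ε < L x} ≤
      ENNReal.ofReal (Real.exp (-(t * ε))) * ∫⁻ x, ENNReal.ofReal (Real.exp (t * L x)) ∂μ := by
  have h_markov : ENNReal.ofReal (Real.exp (t * ε)) * μ {x | ε < L x} ≤
      ∫⁻ x, ENNReal.ofReal (Real.exp (t * L x)) ∂μ := by
    refine le_trans ?_
      (mul_meas_ge_le_lintegral (by fun_prop) (ENNReal.ofReal (Real.exp (t * ε))))
    gcongr with x
    exact fun hx ↦ ENNReal.ofReal_le_ofReal (Real.exp_le_exp.mpr (by nlinarith))
  calc μ {x | ε < L x}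
      = ENNReal.ofReal (Real.exp (-(t * ε))) *
          (ENNReal.ofReal (Real.exp (t * ε)) * μ {x | ε < L x}) := by
        rw [← mul_assoc, ← ENNReal.ofReal_mul (Real.exp_nonneg _), ← Real.exp_add,
          neg_add_cancel, Real.exp_zero, ENNReal.ofReal_one, one_mul]
    _ ≤ _ := by gcongr

end PrivacyLoss

section Product

variable {ι : Type*} [Fintype ι] {Ω : ι → Type*} [∀ i, MeasurableSpace (Ω i)]
  {μ : (i : ι) → Measure (Ω i)} [∀ i, IsProbabilityMeasure (μ i)]

theorem lintegral_fintype_prod_eq_prod {f : (i : ι) → Ω i → ℝ≥0∞} (hf : ∀ i, Measurable (f i)) :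
    ∫⁻ x, ∏ i, f i (x i) ∂Measure.pi μ = ∏ i, ∫⁻ y, f i y ∂μ i := by
  have h_indep := lintegral_prod_eq_prod_lintegral_of_indepFun Finset.univ
    (fun i (x : ∀ j, Ω j) ↦ f i (x i))
    (iIndepFun_pi (μ := μ) fun i ↦ (hf i).aemeasurable)
    fun i ↦ (hf i).comp (measurable_pi_apply i)
  rw [h_indep]
  exact Finset.prod_congr rfl fun i _ ↦ (measurePreserving_eval μ i).lintegral_comp (hf i)

theorem MeasureTheory.Measure.pi_withDensity {f : (i : ι) → Ω i → ℝ≥0∞}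
    (hf : ∀ i, Measurable (f i))
    [∀ i, SigmaFinite ((μ i).withDensity (f i))] :
    Measure.pi (fun i ↦ (μ i).withDensity (f i)) =
      (Measure.pi μ).withDensity fun x ↦ ∏ i, f i (x i) := by
  refine Measure.pi_eq fun s hs ↦ ?_
  have h_box : (Set.univ.pi s).indicator (fun x ↦ ∏ i, f i (x i)) =
      fun x ↦ ∏ i, (s i).indicator (f i) (x i) := by
    classical
    ext x
    simp only [Set.indicator_apply, Set.mem_univ_pi, Finset.prod_ite_zero, Finset.mem_univ,
      true_implies]
  rw [withDensity_apply _ (MeasurableSet.univ_pi hs), ← lintegral_indicator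
    (MeasurableSet.univ_pi hs), h_box,
    lintegral_fintype_prod_eq_prod fun i ↦ (hf i).indicator (hs i)]
  exact Finset.prod_congr rfl fun i _ ↦ by
    rw [lintegral_indicator (hs i), withDensity_apply _ (hs i)]

end Product

section Gaussian

/-- The privacy loss `log (φ_{m,v} y / φ_{m',v} y)` of the output `y` between the Gaussian
densities with means `m` and `m'`. -/
noncomputable def gaussianPrivacyLoss (m m' : ℝ) (v : ℝ≥0) (y : ℝ) : ℝ :=
  ((y - m') ^ 2 - (y - m) ^ 2) / (2 * v)

variable {m m' : ℝ} {v : ℝ≥0}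

@[fun_prop]
theorem measurable_gaussianPrivacyLoss : Measurable (gaussianPrivacyLoss m m' v) := by
  unfold gaussianPrivacyLoss
  fun_prop

theorem gaussianPDFReal_eq_exp_gaussianPrivacyLoss_mul (y : ℝ) :
    gaussianPDFReal m v y = Real.exp (gaussianPrivacyLoss m m' v y) * gaussianPDFReal m' v y := by
  rw [gaussianPDFReal, gaussianPDFReal, mul_left_comm, ← Real.exp_add, gaussianPrivacyLoss,
    ← add_div]
  ring_nf

theorem gaussianReal_eq_withDensity_gaussianPrivacyLoss (hv : v ≠ 0) :
    gaussianReal m v =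
      (gaussianReal m' v).withDensity
        fun y ↦ ENNReal.ofReal (Real.exp (gaussianPrivacyLoss m m' v y)) := by
  rw [gaussianReal_of_var_ne_zero _ hv, gaussianReal_of_var_ne_zero _ hv,
    ← withDensity_mul _ (measurable_gaussianPDF _ _) (by fun_prop)]
  congr 1
  ext y
  rw [Pi.mul_apply, gaussianPDF, gaussianPDF,
    gaussianPDFReal_eq_exp_gaussianPrivacyLoss_mul (m' := m'),
    ENNReal.ofReal_mul (Real.exp_nonneg _), mul_comm]

theorem lintegral_exp_mul_gaussianReal (c : ℝ) :
    ∫⁻ y, ENNReal.ofReal (Real.exp (c * y)) ∂gaussianReal m v =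
      ENNReal.ofReal (Real.exp (m * c + v * c ^ 2 / 2)) := by
  rw [← ofReal_integral_eq_lintegral_ofReal (integrable_exp_mul_gaussianReal c)
    (Filter.Eventually.of_forall fun _ ↦ (Real.exp_nonneg _)),
    ← congr_fun (mgf_id_gaussianReal (μ := m) (v := v)) c]
  rfl

theorem lintegral_exp_mul_gaussianPrivacyLoss (hv : v ≠ 0) (t : ℝ) :
    ∫⁻ y, ENNReal.ofReal (Real.exp (t * gaussianPrivacyLoss m m' v y)) ∂gaussianReal m v =
      ENNReal.ofReal (Real.exp ((t + t ^ 2) * ((m - m') ^ 2 / (2 * v)))) := by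
  have hv' : (v : ℝ) ≠ 0 := NNReal.coe_ne_zero.mpr hv
  have h_affine : ∀ y, t * gaussianPrivacyLoss m m' v y =
      t * ((m' ^ 2 - m ^ 2) / (2 * v)) + t * (m - m') / v * y := fun y ↦ by
    rw [gaussianPrivacyLoss]
    field_simp
    ring
  simp_rw [h_affine, Real.exp_add, ENNReal.ofReal_mul (Real.exp_nonneg _)]
  rw [lintegral_const_mul _ (by fun_prop), lintegral_exp_mul_gaussianReal,
    ← ENNReal.ofReal_mul (Real.exp_nonneg _), ← Real.exp_add]
  congr 2
  field_simp
  ring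

variable {ι : Type*} [Fintype ι] (a a' : ι → ℝ)

theorem pi_gaussianReal_eq_withDensity (hv : v ≠ 0) :
    Measure.pi (fun i ↦ gaussianReal (a i) v) =
      (Measure.pi fun i ↦ gaussianReal (a' i) v).withDensity
        fun x ↦ ENNReal.ofReal (Real.exp (∑ i, gaussianPrivacyLoss (a i) (a' i) v (x i))) := by
  simp_rw [Real.exp_sum, ENNReal.ofReal_prod_of_nonneg fun _ _ ↦ Real.exp_nonneg _]
  rw [← Measure.pi_withDensity (f := fun i y ↦
    ENNReal.ofReal (Real.exp (gaussianPrivacyLoss (a i) (a' i) v y))) fun i ↦ by fun_prop]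
  exact congrArg Measure.pi (funext fun i ↦ gaussianReal_eq_withDensity_gaussianPrivacyLoss hv)

theorem lintegral_exp_mul_sum_gaussianPrivacyLoss (hv : v ≠ 0) (t : ℝ) :
    ∫⁻ x, ENNReal.ofReal (Real.exp (t * ∑ i, gaussianPrivacyLoss (a i) (a' i) v (x i)))
        ∂Measure.pi (fun i ↦ gaussianReal (a i) v) =
      ENNReal.ofReal (Real.exp ((t + t ^ 2) * ((∑ i, (a i - a' i) ^ 2) / (2 * v)))) := by
  simp_rw [Finset.mul_sum, Real.exp_sum,
    ENNReal.ofReal_prod_of_nonneg fun _ _ ↦ Real.exp_nonneg _]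
  rw [lintegral_fintype_prod_eq_prod (f := fun i y ↦
    ENNReal.ofReal (Real.exp (t * gaussianPrivacyLoss (a i) (a' i) v y))) fun i ↦ by fun_prop]
  simp_rw [lintegral_exp_mul_gaussianPrivacyLoss hv, Finset.sum_div, Finset.mul_sum,
    Real.exp_sum, ENNReal.ofReal_prod_of_nonneg fun _ _ ↦ Real.exp_nonneg _]

end Gaussian

theorem sum_sub_sq_le_of_sqrt_sum_sq_le {ι : Type*} [Fintype ι] {a a' : ι → ℝ} {r : ℝ}
    (ha : Real.sqrt (∑ i, a i ^ 2) ≤ r) (ha' : Real.sqrt (∑ i, a' i ^ 2) ≤ r) :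
    ∑ i, (a i - a' i) ^ 2 ≤ (2 * r) ^ 2 := by
  have h_norm : ∀ b : ι → ℝ, ‖WithLp.toLp 2 b‖ = Real.sqrt (∑ i, b i ^ 2) := fun b ↦ by
    simp [EuclideanSpace.norm_eq]
  have h_dist := norm_sub_le (WithLp.toLp 2 a) (WithLp.toLp 2 a')
  rw [← WithLp.toLp_sub, h_norm, h_norm, h_norm] at h_dist
  rw [← Real.sqrt_le_left (by linarith [Real.sqrt_nonneg (∑ i, a i ^ 2)])]
  simp only [Pi.sub_apply] at h_dist
  linarith

theorem exists_chernoff_exponent {ε δ s : ℝ} (hε : 0 < ε) (hε1 : ε ≤ 1) (hδ0 : 0 < δ)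
    (hδ1 : δ < 1) (hs : s ≤ ε ^ 2 / (4 * Real.log (2 / δ))) :
    ∃ t, 0 ≤ t ∧ Real.exp (-(t * ε) + (t + t ^ 2) * s) ≤ δ := by
  have h_logδ : Real.log δ = Real.log 2 - Real.log (2 / δ) := by
    rw [Real.log_div two_ne_zero hδ0.ne']; ring
  have h_log2 : 0.6931471803 < Real.log 2 := Real.log_two_gt_d9
  have h_ℓ : Real.log 2 < Real.log (2 / δ) :=
    Real.log_lt_log two_pos (by rw [lt_div_iff₀ hδ0]; linarith)
  set ℓ := Real.log (2 / δ)
  have h_ℓ0 : 0 < ℓ := by linarith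
  -- `t` minimises `-tε + (t + t²) ε² / (4ℓ)`
  set t := 2 * ℓ / ε - 1 / 2
  have ht : 0 ≤ t := by
    rw [sub_nonneg, le_div_iff₀ hε]; linarith
  refine ⟨t, ht, ?_⟩
  rw [← Real.exp_log hδ0, Real.exp_le_exp, h_logδ]
  have h_min : -(t * ε) + (t + t ^ 2) * (ε ^ 2 / (4 * ℓ)) = -ℓ + ε / 2 - ε ^ 2 / (16 * ℓ) := by
    simp only [t]
    field_simp
    ring
  have h_s : (t + t ^ 2) * s ≤ (t + t ^ 2) * (ε ^ 2 / (4 * ℓ)) := by gcongr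
  have h_rem : 0 ≤ ε ^ 2 / (16 * ℓ) := by positivity
  linarith

theorem gaussian_randomizer_privacy_general
    (d : ℕ) (r ε δ : ℝ) (hr : 0 < r)
    (hε : 0 < ε) (hε1 : ε ≤ 1) (hδ0 : 0 < δ) (hδ1 : δ < 1)
    (a a' : Fin d → ℝ)
    (ha : Real.sqrt (∑ i, (a i) ^ 2) ≤ r)
    (ha' : Real.sqrt (∑ i, (a' i) ^ 2) ≤ r)
    (σ2 : ℝ≥0) (hσ2 : (σ2 : ℝ) = 8 * r ^ 2 * Real.log (2 / δ) / ε ^ 2)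
    (O : Set (Fin d → ℝ)) :
    Measure.pi (fun i => gaussianReal (a i) σ2) O ≤
      ENNReal.ofReal (Real.exp ε) * Measure.pi (fun i => gaussianReal (a' i) σ2) O
        + ENNReal.ofReal δ := by
  have h_log : 0 < Real.log (2 / δ) := Real.log_pos (by rw [lt_div_iff₀ hδ0]; linarith)
  have hσ2_pos : (0 : ℝ) < σ2 := by rw [hσ2]; positivity
  have hσ2_ne : σ2 ≠ 0 := NNReal.coe_ne_zero.mp hσ2_pos.ne'
  have h_sens : (∑ i, (a i - a' i) ^ 2) / (2 * σ2) ≤ ε ^ 2 / (4 * Real.log (2 / δ)) := by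
    have h_dist := sum_sub_sq_le_of_sqrt_sum_sq_le ha ha'
    rw [div_le_div_iff₀ (by positivity) (by positivity), hσ2]
    field_simp
    nlinarith
  obtain ⟨t, ht, h_tail⟩ := exists_chernoff_exponent hε hε1 hδ0 hδ1 h_sens
  refine (measure_le_exp_mul_add_measure_lt
    (pi_gaussianReal_eq_withDensity a a' hσ2_ne) ε O).trans (add_le_add_right ?_ _)
  calc _ ≤ _ := measure_lt_le_exp_mul_lintegral_exp (by fun_prop) ht ε
    _ = ENNReal.ofReal (Real.exp (-(t * ε) +
          (t + t ^ 2) * ((∑ i, (a i - a' i) ^ 2) / (2 * σ2)))) := by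
      rw [lintegral_exp_mul_sum_gaussianPrivacyLoss a a' hσ2_ne, ← ENNReal.ofReal_mul
        (Real.exp_nonneg _), ← Real.exp_add]
    _ ≤ ENNReal.ofReal δ := ENNReal.ofReal_le_ofReal h_tail

/-- Privacy of the Gaussian local randomizer. For columns `a, a'` of
Euclidean norm at most `r` and `σ² = 8 r² ln(2/δ) / ε²`, the product of one-dimensional
Gaussians `N(aᵢ, σ²)` is `(ε, δ)`-close to the product of `N(a'ᵢ, σ²)` on every
measurable set. -/
theorem gaussian_randomizer_privacy
    (d : ℕ) (hd : 1 ≤ d) (r ε δ : ℝ) (hr : 0 < r)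
    (hε : 0 < ε) (hε1 : ε ≤ 1) (hδ0 : 0 < δ) (hδ1 : δ < 1)
    (a a' : Fin d → ℝ)
    (ha : Real.sqrt (∑ i, (a i) ^ 2) ≤ r)
    (ha' : Real.sqrt (∑ i, (a' i) ^ 2) ≤ r)
    (σ2 : ℝ≥0) (hσ2 : (σ2 : ℝ) = 8 * r ^ 2 * Real.log (2 / δ) / ε ^ 2)
    (O : Set (Fin d → ℝ)) (hO : MeasurableSet O) :
    Measure.pi (fun i => gaussianReal (a i) σ2) O ≤
      ENNReal.ofReal (Real.exp ε) * Measure.pi (fun i => gaussianReal (a' i) σ2) O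
        + ENNReal.ofReal δ :=
  gaussian_randomizer_privacy_general d r ε δ hr hε hε1 hδ0 hδ1 a a' ha ha' σ2 hσ2 O
end

section
/- Accuracy of the Gaussian protocol without projection (first case of Theorem 3.2). Let d, J, n ≥ 1, r > 0, ε > 0, δ ∈ (0,1). Let A ∈ ℝ^{d×J} have columns a₁, …, a_J with ‖a_j‖₂ ≤ r for all j, and let p ∈ Simplex(J). Let v₁, …, v_n be i.i.d. samples from p, let z₁, …, z_n be i.i.d. d-dimensional Gaussian vectors with independent N(0, σ²) coordinates where σ² = 2 r² ln(2/δ)/ε², independent of the v_i's, and set ȳ = (1/n) Σ_{i=1}^n (a_{v_i} + z_i). Then E‖ȳ − A p‖₂ ≤ r·√(2 d ln(2/δ)/(n ε²)) + r/√n. -/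
open MeasureTheory ProbabilityTheory
open scoped NNReal ENNReal

/-- The measure on `Fin J` corresponding to a probability vector `p` (when `p` lies in the
probability simplex, this is the distribution assigning mass `p j` to `j`). -/
noncomputable def discMeasure {J : ℕ} (p : Fin J → ℝ) : Measure (Fin J) :=
  ∑ j, ENNReal.ofReal (p j) • Measure.dirac j

/-! The error `ȳ - A p` is the sum of the sample-mean error of the data, `(1/n) ∑ a_{vᵢ} - A p`,
and that of the noise, `(1/n) ∑ zᵢ`; they live on the two factors of the product space, so the
triangle inequality bounds the expected norm by the sum of their expected norms. Each of those is
at most the root of its second moment, and by independence of the samples that second moment is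
`1/n` times the total variance of one sample: at most `r²` for the data (as `‖a_j‖ ≤ r`) and exactly
`d σ²` for the noise. -/

noncomputable def sampleMean {α : Type*} {n : ℕ} (f : α → ℝ) (x : Fin n → α) : ℝ :=
  (n : ℝ)⁻¹ * ∑ i, f (x i)

section SampleMean

variable {α : Type*} [MeasurableSpace α] {μ : Measure α} [IsProbabilityMeasure μ]
  {f : α → ℝ} {n : ℕ}

lemma memLp_sampleMean (hf : MemLp f 2 μ) :
    MemLp (sampleMean f) 2 (Measure.pi fun _ : Fin n => μ) :=
  (memLp_finsetSum _ fun i _ => hf.comp_measurePreserving (measurePreserving_eval _ i)).const_mul _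

lemma integral_sampleMean (hf : Integrable f μ) (hn : n ≠ 0) :
    ∫ x, sampleMean f x ∂(Measure.pi fun _ : Fin n => μ) = μ[f] := by
  simp only [sampleMean, integral_const_mul]
  rw [integral_finsetSum _ fun i _ => integrable_comp_eval hf]
  simp only [integral_comp_eval (μ := fun _ : Fin n => μ) hf.aestronglyMeasurable,
    Finset.sum_const, Finset.card_univ, Fintype.card_fin, nsmul_eq_mul]
  field_simp

lemma variance_sampleMean (hf : MemLp f 2 μ) :
    Var[sampleMean f; Measure.pi fun _ : Fin n => μ] = Var[f; μ] / n := by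
  have hsum := variance_sum_pi (μ := fun _ : Fin n => μ) (X := fun _ => f) fun _ => hf
  simp only [Finset.sum_const, Finset.card_univ, Fintype.card_fin, nsmul_eq_mul] at hsum
  have hmean : sampleMean f = fun x => (n : ℝ)⁻¹ * (∑ i : Fin n, fun x => f (x i)) x := by
    ext x; simp [sampleMean]
  rw [hmean, variance_const_mul, hsum]
  rcases eq_or_ne n 0 with rfl | hn
  · simp
  · field_simp

lemma integral_sq_sampleMean_sub (hf : MemLp f 2 μ) (hn : n ≠ 0) :
    ∫ x, (sampleMean f x - μ[f]) ^ 2 ∂(Measure.pi fun _ : Fin n => μ) = Var[f; μ] / n := by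
  rw [← variance_sampleMean hf, variance_eq_integral (memLp_sampleMean hf).aemeasurable,
    integral_sampleMean (hf.integrable one_le_two) hn]

end SampleMean

lemma integral_norm_le_sqrt_integral_norm_sq {Ω E : Type*} [MeasurableSpace Ω]
    [NormedAddCommGroup E] {μ : Measure Ω} [IsProbabilityMeasure μ] {Y : Ω → E}
    (hY : MemLp Y 2 μ) : ∫ ω, ‖Y ω‖ ∂μ ≤ √(∫ ω, ‖Y ω‖ ^ 2 ∂μ) := by
  have h := variance_nonneg (fun ω => ‖Y ω‖) μ
  rw [variance_eq_sub hY.norm] at h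
  exact (le_abs_self _).trans (Real.abs_le_sqrt (by simpa using h))

lemma integral_norm_add_prod_le {α β E : Type*} [MeasurableSpace α] [MeasurableSpace β]
    [NormedAddCommGroup E] {μ : Measure α} {ν : Measure β} [IsProbabilityMeasure μ]
    [IsProbabilityMeasure ν] {U : α → E} {W : β → E} (hU : Integrable U μ) (hW : Integrable W ν) :
    ∫ z, ‖U z.1 + W z.2‖ ∂μ.prod ν ≤ ∫ a, ‖U a‖ ∂μ + ∫ b, ‖W b‖ ∂ν := by
  have hU' := hU.norm.comp_fst ν
  have hW' := hW.norm.comp_snd μ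
  calc ∫ z, ‖U z.1 + W z.2‖ ∂μ.prod ν ≤ ∫ z, (‖U z.1‖ + ‖W z.2‖) ∂μ.prod ν :=
        integral_mono_of_nonneg (ae_of_all _ fun _ => norm_nonneg _) (hU'.add hW')
          (ae_of_all _ fun _ => norm_add_le _ _)
    _ = ∫ a, ‖U a‖ ∂μ + ∫ b, ‖W b‖ ∂ν := by
        rw [integral_add hU' hW', integral_fun_fst fun a => ‖U a‖,
          integral_fun_snd fun b => ‖W b‖]
        simp

noncomputable def sampleMeanError {α ι : Type*} [MeasurableSpace α] {n : ℕ} (μ : Measure α)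
    (F : α → ι → ℝ) (x : Fin n → α) : EuclideanSpace ℝ ι :=
  WithLp.toLp 2 fun k => sampleMean (F · k) x - ∫ a, F a k ∂μ

section SampleMeanError

variable {α ι : Type*} [MeasurableSpace α] [Fintype ι] {μ : Measure α} [IsProbabilityMeasure μ]
  {F : α → ι → ℝ} {n : ℕ}

lemma memLp_sampleMeanError (hF : ∀ k, MemLp (F · k) 2 μ) :
    MemLp (sampleMeanError (n := n) μ F) 2 (Measure.pi fun _ : Fin n => μ) :=
  MemLp.of_eval_piLp fun k => (memLp_sampleMean (hF k)).sub (memLp_const _)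

lemma integral_norm_sampleMeanError_le (hF : ∀ k, MemLp (F · k) 2 μ) (hn : n ≠ 0) :
    ∫ x, ‖sampleMeanError μ F x‖ ∂(Measure.pi fun _ : Fin n => μ)
      ≤ √((∑ k, Var[(F · k); μ]) / n) := by
  refine (integral_norm_le_sqrt_integral_norm_sq (memLp_sampleMeanError hF)).trans_eq ?_
  have hnorm : ∀ x : Fin n → α, ‖sampleMeanError μ F x‖ ^ 2
      = ∑ k, (sampleMean (F · k) x - ∫ a, F a k ∂μ) ^ 2 := by
    simp [sampleMeanError, EuclideanSpace.norm_sq_eq]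
  have hint : ∀ k, Integrable (fun x => (sampleMean (F · k) x - ∫ a, F a k ∂μ) ^ 2)
      (Measure.pi fun _ : Fin n => μ) := fun k =>
    ((memLp_sampleMean (hF k)).sub (memLp_const _)).integrable_sq
  simp only [hnorm]
  rw [integral_finsetSum _ fun k _ => hint k, Finset.sum_div]
  simp only [integral_sq_sampleMean_sub (hF _) hn]

lemma sum_variance_le_of_sum_sq_le (hF : ∀ k, MemLp (F · k) 2 μ) {r : ℝ}
    (hr : ∀ a, ∑ k, F a k ^ 2 ≤ r ^ 2) : ∑ k, Var[(F · k); μ] ≤ r ^ 2 := by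
  have hsq : ∀ k, Integrable (fun a => F a k ^ 2) μ := fun k => (hF k).integrable_sq
  calc ∑ k, Var[(F · k); μ] ≤ ∑ k, ∫ a, F a k ^ 2 ∂μ :=
        Finset.sum_le_sum fun k _ => variance_le_expectation_sq (hF k).aestronglyMeasurable
    _ = ∫ a, ∑ k, F a k ^ 2 ∂μ := (integral_finsetSum _ fun k _ => hsq k).symm
    _ ≤ ∫ _, r ^ 2 ∂μ := integral_mono (integrable_finsetSum _ fun k _ => hsq k)
        (integrable_const _) hr
    _ = r ^ 2 := by simp

end SampleMeanError

section DiscMeasure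

variable {J : ℕ} {p : Fin J → ℝ}

lemma isProbabilityMeasure_discMeasure (hp0 : ∀ j, 0 ≤ p j) (hp1 : ∑ j, p j = 1) :
    IsProbabilityMeasure (discMeasure p) := by
  constructor
  simp only [discMeasure, Measure.coe_finsetSum, Finset.sum_apply, Measure.smul_apply,
    measure_univ, smul_eq_mul, mul_one]
  rw [← ENNReal.ofReal_sum_of_nonneg fun j _ => hp0 j, hp1, ENNReal.ofReal_one]

lemma integral_discMeasure (hp0 : ∀ j, 0 ≤ p j) (f : Fin J → ℝ) :
    ∫ j, f j ∂discMeasure p = ∑ j, f j * p j := by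
  rw [discMeasure, integral_finsetSum_measure fun j _ =>
    (Integrable.of_finite (μ := Measure.dirac j)).smul_measure ENNReal.ofReal_ne_top]
  refine Finset.sum_congr rfl fun j _ => ?_
  rw [integral_smul_measure, integral_dirac, ENNReal.toReal_ofReal (hp0 j), smul_eq_mul, mul_comm]

end DiscMeasure

section GaussianVector

variable {ι : Type*} [Fintype ι] {m : ℝ} {v : ℝ≥0} (k : ι)

lemma memLp_eval_pi_gaussianReal :
    MemLp (fun z : ι → ℝ => z k) 2 (Measure.pi fun _ => gaussianReal m v) :=
  (memLp_id_gaussianReal 2).comp_measurePreserving (measurePreserving_eval _ k)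

lemma integral_eval_pi_gaussianReal :
    ∫ z : ι → ℝ, z k ∂(Measure.pi fun _ => gaussianReal m v) = m :=
  (integral_comp_eval (X := fun _ => ℝ) (μ := fun _ => gaussianReal m v) (f := fun x => x)
    aestronglyMeasurable_id).trans integral_id_gaussianReal

lemma variance_eval_pi_gaussianReal :
    Var[fun z : ι → ℝ => z k; Measure.pi fun _ => gaussianReal m v] = v :=
  ((measurePreserving_eval (fun _ => gaussianReal m v) k).variance_fun_comp (f := id)
    aemeasurable_id).trans variance_id_gaussianReal

end GaussianVector

theorem gaussian_protocol_accuracy_no_projection_general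
    (d J n : ℕ) (hn : 1 ≤ n)
    (r ε δ : ℝ) (hr : 0 < r)
    (A : Fin d → Fin J → ℝ)
    (hA : ∀ j, Real.sqrt (∑ k, (A k j) ^ 2) ≤ r)
    (p : Fin J → ℝ) (hp0 : ∀ j, 0 ≤ p j) (hp1 : ∑ j, p j = 1)
    (σ2 : ℝ≥0) (hσ2 : (σ2 : ℝ) = 2 * r ^ 2 * Real.log (2 / δ) / ε ^ 2) :
    ∫ ω : (Fin n → Fin J) × (Fin n → Fin d → ℝ),
        Real.sqrt (∑ k, ((n : ℝ)⁻¹ * (∑ i, (A k (ω.1 i) + ω.2 i k))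
            - ∑ j, A k j * p j) ^ 2)
      ∂((Measure.pi fun _ : Fin n => discMeasure p).prod
          (Measure.pi fun _ : Fin n => Measure.pi fun _ : Fin d => gaussianReal 0 σ2))
      ≤ r * Real.sqrt (2 * d * Real.log (2 / δ) / (n * ε ^ 2)) + r / Real.sqrt n := by
  have hμ : IsProbabilityMeasure (discMeasure p) := isProbabilityMeasure_discMeasure hp0 hp1
  have hn0 : n ≠ 0 := Nat.one_le_iff_ne_zero.mp hn
  set ν := Measure.pi fun _ : Fin d => gaussianReal 0 σ2
  set F : Fin J → Fin d → ℝ := fun j k => A k j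
  have hF : ∀ k, MemLp (F · k) 2 (discMeasure p) := fun k => MemLp.of_discrete
  have hZ : ∀ k, MemLp (fun z : Fin d → ℝ => z k) 2 ν := memLp_eval_pi_gaussianReal
  have hsplit : ∀ ω : (Fin n → Fin J) × (Fin n → Fin d → ℝ),
      √(∑ k, ((n : ℝ)⁻¹ * (∑ i, (A k (ω.1 i) + ω.2 i k)) - ∑ j, A k j * p j) ^ 2)
        = ‖sampleMeanError (discMeasure p) F ω.1 + sampleMeanError ν (fun z => z) ω.2‖ := by
    intro ω
    simp only [EuclideanSpace.norm_eq, Real.norm_eq_abs, sq_abs]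
    congr 1
    refine Finset.sum_congr rfl fun k _ => ?_
    simp only [sampleMeanError, sampleMean, integral_discMeasure hp0,
      ν, integral_eval_pi_gaussianReal, F, Finset.sum_add_distrib, WithLp.ofLp_add, Pi.add_apply]
    ring
  have hdata : ∑ k, Var[(F · k); discMeasure p] ≤ r ^ 2 :=
    sum_variance_le_of_sum_sq_le hF fun j => (Real.sqrt_le_left hr.le).1 (hA j)
  have hnoise : ∑ k, Var[fun z : Fin d → ℝ => z k; ν] = d * σ2 := by
    simp [ν, variance_eval_pi_gaussianReal]
  rw [integral_congr_ae (ae_of_all _ hsplit)]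
  calc _ ≤ _ := integral_norm_add_prod_le ((memLp_sampleMeanError hF).integrable one_le_two)
        ((memLp_sampleMeanError hZ).integrable one_le_two)
    _ ≤ √(r ^ 2 / n) + √(d * σ2 / n) := by
        gcongr
        · exact (integral_norm_sampleMeanError_le hF hn0).trans (by gcongr)
        · exact (integral_norm_sampleMeanError_le hZ hn0).trans_eq (by rw [hnoise])
    _ = r * √(2 * d * Real.log (2 / δ) / (n * ε ^ 2)) + r / √n := by
        rw [hσ2, show (d : ℝ) * (2 * r ^ 2 * Real.log (2 / δ) / ε ^ 2) / n
            = r ^ 2 * (2 * d * Real.log (2 / δ) / (n * ε ^ 2)) by ring,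
          Real.sqrt_mul (sq_nonneg r), Real.sqrt_div (sq_nonneg r), Real.sqrt_sq hr.le, add_comm]

/-- Accuracy of the Gaussian protocol without projection. The data
`v₁, …, v_n` are i.i.d. from `p` and the noises `z₁, …, z_n` are i.i.d. `d`-dimensional
Gaussians with independent `N(0, σ²)` coordinates, independent of the data; this is modeled
by the product measure on `(Fin n → Fin J) × (Fin n → Fin d → ℝ)`. With
`ȳ = (1/n) ∑ᵢ (a_{vᵢ} + zᵢ)`, the expected Euclidean error `E ‖ȳ - A p‖₂` is at most
`r √(2 d ln(2/δ)/(n ε²)) + r/√n`. -/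
theorem gaussian_protocol_accuracy_no_projection
    (d J n : ℕ) (hd : 1 ≤ d) (hJ : 1 ≤ J) (hn : 1 ≤ n)
    (r ε δ : ℝ) (hr : 0 < r) (hε : 0 < ε) (hδ0 : 0 < δ) (hδ1 : δ < 1)
    (A : Fin d → Fin J → ℝ)
    (hA : ∀ j, Real.sqrt (∑ k, (A k j) ^ 2) ≤ r)
    (p : Fin J → ℝ) (hp0 : ∀ j, 0 ≤ p j) (hp1 : ∑ j, p j = 1)
    (σ2 : ℝ≥0) (hσ2 : (σ2 : ℝ) = 2 * r ^ 2 * Real.log (2 / δ) / ε ^ 2) :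
    ∫ ω : (Fin n → Fin J) × (Fin n → Fin d → ℝ),
        Real.sqrt (∑ k, ((n : ℝ)⁻¹ * (∑ i, (A k (ω.1 i) + ω.2 i k))
            - ∑ j, A k j * p j) ^ 2)
      ∂((Measure.pi fun _ : Fin n => discMeasure p).prod
          (Measure.pi fun _ : Fin n => Measure.pi fun _ : Fin d => gaussianReal 0 σ2))
      ≤ r * Real.sqrt (2 * d * Real.log (2 / δ) / (n * ε ^ 2)) + r / Real.sqrt n :=
  gaussian_protocol_accuracy_no_projection_general d J n hn r ε δ hr A hA p hp0 hp1 σ2 hσ2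
end

section
/- Privacy of rejection sampling (Theorem 3.3, stated abstractly with the hypotheses its proof uses). Let ε ∈ (0,1] and 0 ≤ δ ≤ ε/32. Let μ₀ be a probability measure on a measurable space Y, and for each input v in a set V let ν_v be a probability measure on Y absolutely continuous with respect to μ₀, with density ρ_v = dν_v/dμ₀. Define Good_v = {y ∈ Y : e^{−ε/4} ≤ ρ_v(y) ≤ e^{ε/4}}, and assume μ₀(Y \ Good_v) ≤ δ for every v ∈ V. For input v, the randomizer samples Y ~ μ₀ and outputs a bit B ∈ {0,1} with P(B = 1 | Y = y) = ρ_v(y)/2 if y ∈ Good_v and P(B = 1 | Y = y) = 0 otherwise. Then for all v, v' ∈ V and every b ∈ {0,1}, P_v(B = b) ≤ e^ε · P_{v'}(B = b); i.e., the bit B satisfies ε-local differential privacy. -/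
/-!
With `t = e^{ε/4}`, the acceptance probability `∫_{Good v} ρ_v / 2 dμ₀` lies between
`(1 - δ) / (2t)` (the density is at least `1/t` on a set of mass at least `1 - δ`) and `t / 2`,
whatever `v` is. Both privacy inequalities then reduce to polynomial inequalities in
`t ∈ [1 + ε/4, 4/3]`, where `δ ≤ ε/32 ≤ (t - 1)/8`.
-/

open MeasureTheory Set Real

theorem setIntegral_mem_Icc_of_measureReal_compl_le {α : Type*} [MeasurableSpace α]
    {μ : Measure α} [IsProbabilityMeasure μ] {s : Set α} {f : α → ℝ} {a b δ : ℝ}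
    (hs : MeasurableSet s) (hf : AEStronglyMeasurable f μ) (ha : 0 ≤ a) (hb : 0 ≤ b)
    (hfs : ∀ x ∈ s, f x ∈ Icc a b) (hsc : μ.real sᶜ ≤ δ) :
    ∫ x in s, f x ∂μ ∈ Icc ((1 - δ) * a) b := by
  have hnorm : ∀ x ∈ s, ‖f x‖ ≤ b := fun x hx => by
    rw [Real.norm_of_nonneg (ha.trans (hfs x hx).1)]
    exact (hfs x hx).2
  have hint : IntegrableOn f s μ :=
    Measure.integrableOn_of_bounded (measure_ne_top μ s) hf (ae_restrict_of_forall_mem hs hnorm)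
  rw [probReal_compl_eq_one_sub hs] at hsc
  constructor
  · calc (1 - δ) * a ≤ a * μ.real s := by nlinarith
      _ ≤ ∫ x in s, f x ∂μ :=
          setIntegral_ge_of_const_le_real hs (measure_ne_top μ s) (fun x hx => (hfs x hx).1) hint
  · calc ∫ x in s, f x ∂μ ≤ ‖∫ x in s, f x ∂μ‖ := le_norm_self _
      _ ≤ b * μ.real s := norm_setIntegral_le_of_norm_le_const (measure_lt_top μ s) hnorm
      _ ≤ b := mul_le_of_le_one_right hb measureReal_le_one

theorem exp_eq_exp_div_four_pow (ε : ℝ) : exp ε = exp (ε / 4) ^ 4 := by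
  rw [← exp_nat_mul]; ring_nf

theorem exp_neg_div_four (ε : ℝ) : exp (-ε / 4) = (exp (ε / 4))⁻¹ := by
  rw [← exp_neg]; ring_nf

section ExpBounds

variable {ε δ : ℝ}

theorem exp_div_four_mem_Icc (hε : 0 ≤ ε) (hε1 : ε ≤ 1) :
    exp (ε / 4) ∈ Icc (1 + ε / 4) (4 / 3) := by
  refine ⟨by linarith [add_one_le_exp (ε / 4)], ?_⟩
  calc exp (ε / 4) ≤ 1 / (1 - ε / 4) :=
        exp_bound_div_one_sub_of_interval (by positivity) (by linarith)
    _ ≤ 4 / 3 := by rw [div_le_div_iff₀ (by linarith) (by norm_num)]; linarith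

theorem exp_div_four_div_two_le (hε : 0 ≤ ε) (hε1 : ε ≤ 1) (hδ : δ ≤ ε / 32) :
    exp (ε / 4) / 2 ≤ exp ε * ((1 - δ) * (exp (-ε / 4) / 2)) := by
  obtain ⟨ht1, ht2⟩ := exp_div_four_mem_Icc hε hε1
  rw [exp_eq_exp_div_four_pow ε, exp_neg_div_four]
  set t := exp (ε / 4)
  have htδ : 1 ≤ t ^ 2 * (1 - δ) := by
    nlinarith [mul_nonneg (sub_nonneg.2 (by linarith : 1 ≤ t)) (sub_nonneg.2 ht2)]
  have hrhs : t ^ 4 * ((1 - δ) * (t⁻¹ / 2)) = t * (t ^ 2 * (1 - δ)) / 2 := by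
    field_simp
  rw [hrhs]
  have htpos : 0 < t := exp_pos _
  nlinarith

theorem one_sub_le_exp_mul_one_sub_exp_div_four (hε : 0 ≤ ε) (hε1 : ε ≤ 1) (hδ : δ ≤ ε / 32) :
    1 - (1 - δ) * (exp (-ε / 4) / 2) ≤ exp ε * (1 - exp (ε / 4) / 2) := by
  obtain ⟨ht1, ht2⟩ := exp_div_four_mem_Icc hε hε1
  rw [exp_eq_exp_div_four_pow ε, exp_neg_div_four]
  set t := exp (ε / 4)
  have htpos : 0 < t := exp_pos _
  have hu : 0 ≤ t - 1 := by linarith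
  have hu' : 0 ≤ 4 / 3 - t := by linarith
  -- with `u = t - 1 ∈ [0, 1/3]`: `2t⁵ - t⁶ - 2t + 1 = 2u + 5u² - 5u⁴ - 4u⁵ - u⁶ ≥ 2u`
  have hpoly : 2 * t - (1 - δ) ≤ 2 * t ^ 5 - t ^ 6 := by
    nlinarith [mul_nonneg (pow_nonneg hu 2) hu', mul_nonneg (pow_nonneg hu 3) hu',
      mul_nonneg (pow_nonneg hu 4) hu', pow_nonneg hu 2, pow_nonneg hu 3, pow_nonneg hu 4]
  have hlhs : 1 - (1 - δ) * (t⁻¹ / 2) = (2 * t - (1 - δ)) / (2 * t) := by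
    field_simp
  have hrhs : t ^ 4 * (1 - t / 2) = (2 * t ^ 5 - t ^ 6) / (2 * t) := by
    field_simp
  rw [hlhs, hrhs]
  gcongr

end ExpBounds

theorem rejection_sampling_privacy_general
    {Y : Type*} [MeasurableSpace Y] {V : Type*}
    (ε δ : ℝ) (hε : 0 < ε) (hε1 : ε ≤ 1) (hδ0 : 0 ≤ δ) (hδ : δ ≤ ε / 32)
    (μ0 : Measure Y) [IsProbabilityMeasure μ0]
    (ρ : V → Y → ℝ) (hρmeas : ∀ v, Measurable (ρ v))
    (Good : V → Set Y)
    (hGood : ∀ v, Good v = {y | Real.exp (-ε / 4) ≤ ρ v y ∧ ρ v y ≤ Real.exp (ε / 4)})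
    (hbad : ∀ v, μ0 (Good v)ᶜ ≤ ENNReal.ofReal δ)
    (acc : V → ℝ) (hacc : ∀ v, acc v = ∫ y in Good v, ρ v y / 2 ∂μ0)
    (v v' : V) :
    acc v ≤ Real.exp ε * acc v' ∧ 1 - acc v ≤ Real.exp ε * (1 - acc v') := by
  have hacc_mem : ∀ w, acc w ∈ Icc ((1 - δ) * (exp (-ε / 4) / 2)) (exp (ε / 4) / 2) := by
    intro w
    have hGood_meas : MeasurableSet (Good w) := by
      rw [hGood]
      exact (measurableSet_le measurable_const (hρmeas w)).inter
        (measurableSet_le (hρmeas w) measurable_const)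
    rw [hacc]
    refine setIntegral_mem_Icc_of_measureReal_compl_le hGood_meas
      ((hρmeas w).div_const 2).aestronglyMeasurable (by positivity) (by positivity)
      (fun y hy => ?_) (ENNReal.toReal_le_of_le_ofReal hδ0 (hbad w))
    rw [hGood] at hy
    exact ⟨by linarith [hy.1], by linarith [hy.2]⟩
  obtain ⟨hv_lo, hv_hi⟩ := hacc_mem v
  obtain ⟨hv'_lo, hv'_hi⟩ := hacc_mem v'
  constructor
  · calc acc v ≤ exp (ε / 4) / 2 := hv_hi
      _ ≤ exp ε * ((1 - δ) * (exp (-ε / 4) / 2)) := exp_div_four_div_two_le hε.le hε1 hδ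
      _ ≤ exp ε * acc v' := by gcongr
  · calc 1 - acc v ≤ 1 - (1 - δ) * (exp (-ε / 4) / 2) := by gcongr
      _ ≤ exp ε * (1 - exp (ε / 4) / 2) := one_sub_le_exp_mul_one_sub_exp_div_four hε.le hε1 hδ
      _ ≤ exp ε * (1 - acc v') := by gcongr

/-- Privacy of rejection sampling, stated abstractly. For each input `v`,
`ρ v` is the density of the target measure `ν_v` with respect to the base probability
measure `μ₀`, `Good v` is the set where the density lies in `[e^{-ε/4}, e^{ε/4}]`, and the
probability that the output bit `B` equals `1` is `acc v = ∫_{Good v} ρ v y / 2 dμ₀(y)`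
(the probability of `B = 0` being `1 - acc v`). If `μ₀((Good v)ᶜ) ≤ δ` for all `v`, with
`0 < ε ≤ 1` and `0 ≤ δ ≤ ε/32`, then `P_v(B = b) ≤ e^ε P_{v'}(B = b)` for `b ∈ {0, 1}`. -/
theorem rejection_sampling_privacy
    {Y : Type*} [MeasurableSpace Y] {V : Type*}
    (ε δ : ℝ) (hε : 0 < ε) (hε1 : ε ≤ 1) (hδ0 : 0 ≤ δ) (hδ : δ ≤ ε / 32)
    (μ0 : Measure Y) [IsProbabilityMeasure μ0]
    (ρ : V → Y → ℝ) (hρmeas : ∀ v, Measurable (ρ v)) (hρ0 : ∀ v y, 0 ≤ ρ v y)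
    (hρ1 : ∀ v, ∫ y, ρ v y ∂μ0 = 1)
    (Good : V → Set Y)
    (hGood : ∀ v, Good v = {y | Real.exp (-ε / 4) ≤ ρ v y ∧ ρ v y ≤ Real.exp (ε / 4)})
    (hbad : ∀ v, μ0 (Good v)ᶜ ≤ ENNReal.ofReal δ)
    (acc : V → ℝ) (hacc : ∀ v, acc v = ∫ y in Good v, ρ v y / 2 ∂μ0)
    (v v' : V) :
    acc v ≤ Real.exp ε * acc v' ∧ 1 - acc v ≤ Real.exp ε * (1 - acc v') :=
  rejection_sampling_privacy_general ε δ hε hε1 hδ0 hδ μ0 ρ hρmeas Good hGood hbad acc hacc v v'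
end

section
/- Projection onto the probability simplex (key geometric step in the proof of Theorem 4.2). Let J ≥ 1, let p ∈ Simplex(J), let p̄ ∈ ℝ^J be arbitrary, and let p̂ be any minimizer of ‖w − p̄‖₂ over w ∈ Simplex(J). Then ‖p̂ − p‖₂² ≤ 4 · max_{j ∈ [J]} |p̄_j − p_j|. -/
/-!
Expanding `‖p̂ - p‖² = ‖p̂ - p̄‖² - ‖p - p̄‖² + 2⟪p̄ - p, p̂ - p⟫` and using that `p̂` is at least as
close to `p̄` as `p` gives `‖p̂ - p‖² ≤ 2⟪p̄ - p, p̂ - p⟫`. Hölder's inequality bounds this by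
`2 ‖p̄ - p‖_∞ ‖p̂ - p‖₁`, and two points of the simplex are at `ℓ¹` distance at most `2`.
-/

open Finset

section

variable {ι : Type*} [Fintype ι]

theorem sum_sq_sub_le_two_mul_sum_of_sum_sq_sub_le {a b c : ι → ℝ}
    (h : ∑ j, (a j - b j) ^ 2 ≤ ∑ j, (c j - b j) ^ 2) :
    ∑ j, (a j - c j) ^ 2 ≤ 2 * ∑ j, (b j - c j) * (a j - c j) := by
  have expand : ∑ j, (a j - c j) ^ 2
      = ∑ j, (a j - b j) ^ 2 - ∑ j, (c j - b j) ^ 2 + 2 * ∑ j, (b j - c j) * (a j - c j) := by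
    rw [mul_sum, ← sum_sub_distrib, ← sum_add_distrib]
    exact sum_congr rfl fun j _ => by ring
  linarith

theorem sum_mul_le_mul_sum_abs_of_abs_le {u v : ι → ℝ} {M : ℝ} (hu : ∀ j, |u j| ≤ M) :
    ∑ j, u j * v j ≤ M * ∑ j, |v j| := by
  rw [mul_sum]
  refine sum_le_sum fun j _ => ?_
  calc u j * v j ≤ |u j| * |v j| := by rw [← abs_mul]; exact le_abs_self _
    _ ≤ M * |v j| := mul_le_mul_of_nonneg_right (hu j) (abs_nonneg _)

theorem sum_abs_sub_le_sum_add_sum_of_nonneg {a b : ι → ℝ} (ha : ∀ j, 0 ≤ a j)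
    (hb : ∀ j, 0 ≤ b j) :
    ∑ j, |a j - b j| ≤ ∑ j, a j + ∑ j, b j := by
  rw [← sum_add_distrib]
  refine sum_le_sum fun j _ => ?_
  calc |a j - b j| ≤ |a j| + |b j| := abs_sub _ _
    _ = a j + b j := by rw [abs_of_nonneg (ha j), abs_of_nonneg (hb j)]

end

/-- projection onto the probability simplex. If `p` lies in the simplex
and `p̂` is any minimizer over the simplex of the Euclidean distance to an arbitrary
`p̄ ∈ ℝ^J`, then `‖p̂ - p‖₂² ≤ 4 maxⱼ |p̄ⱼ - pⱼ|`. -/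
theorem simplex_projection
    (J : ℕ) (hJ : 1 ≤ J)
    (p pbar phat : Fin J → ℝ)
    (hp0 : ∀ j, 0 ≤ p j) (hp1 : ∑ j, p j = 1)
    (hphat0 : ∀ j, 0 ≤ phat j) (hphat1 : ∑ j, phat j = 1)
    (hphatMin : ∀ w : Fin J → ℝ, (∀ j, 0 ≤ w j) → (∑ j, w j = 1) →
        (∑ j, (phat j - pbar j) ^ 2) ≤ ∑ j, (w j - pbar j) ^ 2) :
    ∑ j, (phat j - p j) ^ 2
      ≤ 4 * Finset.univ.sup' ⟨⟨0, hJ⟩, Finset.mem_univ _⟩ (fun j => |pbar j - p j|) := by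
  set M := Finset.univ.sup' ⟨⟨0, hJ⟩, Finset.mem_univ _⟩ (fun j => |pbar j - p j|)
  have hM : ∀ j, |pbar j - p j| ≤ M := fun j => le_sup' (fun j => |pbar j - p j|) (mem_univ j)
  have hM0 : 0 ≤ M := (abs_nonneg _).trans (hM ⟨0, hJ⟩)
  have hl1 : ∑ j, |phat j - p j| ≤ 2 := by
    have := sum_abs_sub_le_sum_add_sum_of_nonneg hphat0 hp0
    rw [hphat1, hp1] at this
    linarith
  calc ∑ j, (phat j - p j) ^ 2
      ≤ 2 * ∑ j, (pbar j - p j) * (phat j - p j) :=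
        sum_sq_sub_le_two_mul_sum_of_sum_sq_sub_le (hphatMin p hp0 hp1)
    _ ≤ 2 * (M * ∑ j, |phat j - p j|) := by gcongr; exact sum_mul_le_mul_sum_abs_of_abs_le hM
    _ ≤ 2 * (M * 2) := by gcongr
    _ = 4 * M := by ring
end

section
/- Accuracy of the projected estimator under coordinatewise subGaussian noise (Theorem 4.2, high-dimensional case, conditional on the subGaussian property of the Hadamard-Response estimate). Let J ≥ 2, n ≥ 1, c > 0. Let p ∈ Simplex(J) and let p̄ be a random vector in ℝ^J such that E[p̄] = p and each coordinate X_j = p̄_j − p_j satisfies the moment-generating-function bound E[e^{t X_j}] ≤ exp( t² · 4c² / (2n) ) for all t ∈ ℝ. Let p̂ be any minimizer of ‖w − p̄‖₂ over w ∈ Simplex(J). Then E‖p̂ − p‖₂² ≤ √( 256 c² ln(J) / n ). -/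
/-! The projection `p̂` of `p̄` onto the simplex satisfies the variational inequality
`‖p̂ - p‖₂² ≤ ⟪p̂ - p, p̄ - p⟫`, and since `‖p̂ - p‖₁ ≤ 2` the right side is at most
`2 ‖p̄ - p‖_∞`. For coordinates that are subgaussian with variance proxy `v`, Jensen and a union
bound over the `2J` variables `±Xⱼ` give `exp (t E‖X‖_∞) ≤ 2J exp (v t² / 2)` for every `t`, and
optimising over `t` gives `E‖X‖_∞ ≤ √(2 v log (2J))`. -/

open MeasureTheory ProbabilityTheory Real Finset
open scoped NNReal InnerProductSpace

theorem norm_sub_sq_le_inner_of_isMinOn {F : Type*} [NormedAddCommGroup F]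
    [InnerProductSpace ℝ F] {K : Set F} (hK : Convex ℝ K) {a b q : F} (ha : a ∈ K) (hq : q ∈ K)
    (hmin : IsMinOn (fun w => ‖b - w‖) K a) :
    ‖a - q‖ ^ 2 ≤ ⟪a - q, b - q⟫_ℝ := by
  have : Nonempty K := ⟨⟨a, ha⟩⟩
  have hinf : ‖b - a‖ = ⨅ w : K, ‖b - w‖ :=
    le_antisymm (le_ciInf fun w => hmin w.2)
      (ciInf_le (f := fun w : K => ‖b - w‖) ⟨0, by rintro _ ⟨w, rfl⟩; positivity⟩ ⟨a, ha⟩)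
  have hvar := (norm_eq_iInf_iff_real_inner_le_zero hK ha).1 hinf q hq
  have hsplit : ⟪a - q, b - q⟫_ℝ = ‖a - q‖ ^ 2 - ⟪b - a, q - a⟫_ℝ := by
    rw [show b - q = (a - q) + (b - a) by abel, inner_add_right, real_inner_self_eq_norm_sq,
      show q - a = -(a - q) by abel, inner_neg_right, real_inner_comm]
    ring
  linarith

section Simplex

variable {ι : Type*} [Fintype ι]

theorem sum_sq_sub_le_sum_mul_sub_of_forall_sum_sq_le {a b q : ι → ℝ} (ha : a ∈ stdSimplex ℝ ι)
    (hq : q ∈ stdSimplex ℝ ι)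
    (hmin : ∀ w ∈ stdSimplex ℝ ι, ∑ i, (a i - b i) ^ 2 ≤ ∑ i, (w i - b i) ^ 2) :
    ∑ i, (a i - q i) ^ 2 ≤ ∑ i, (a i - q i) * (b i - q i) := by
  have hnorm (x y : ι → ℝ) :
      ‖(WithLp.toLp 2 x : EuclideanSpace ℝ ι) - WithLp.toLp 2 y‖ ^ 2 = ∑ i, (x i - y i) ^ 2 := by
    rw [← WithLp.toLp_sub, EuclideanSpace.real_norm_sq_eq]; rfl
  have hK := (convex_stdSimplex ℝ ι).linear_preimage (WithLp.linearEquiv 2 ℝ (ι → ℝ)).toLinearMap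
  have hmin' : IsMinOn (fun w => ‖WithLp.toLp 2 b - w‖) _ (WithLp.toLp 2 a) := fun w hw => by
    rw [Set.mem_ofPred_eq, ← sq_le_sq₀ (norm_nonneg _) (norm_nonneg _), ← WithLp.toLp_ofLp 2 w,
      hnorm, hnorm]
    simpa only [← neg_sub (b _), neg_sq] using hmin _ hw
  have key := norm_sub_sq_le_inner_of_isMinOn hK ha hq hmin'
  rw [hnorm, ← WithLp.toLp_sub, ← WithLp.toLp_sub, EuclideanSpace.inner_eq_star_dotProduct] at key
  simpa [dotProduct, mul_comm] using key

theorem sum_abs_sub_le_two_of_mem_stdSimplex {a q : ι → ℝ} (ha : a ∈ stdSimplex ℝ ι)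
    (hq : q ∈ stdSimplex ℝ ι) : ∑ i, |a i - q i| ≤ 2 :=
  calc ∑ i, |a i - q i| ≤ ∑ i, (a i + q i) :=
        sum_le_sum fun i _ => abs_sub_le_iff.2 ⟨by linarith [hq.1 i], by linarith [ha.1 i]⟩
    _ = 2 := by rw [sum_add_distrib, ha.2, hq.2]; norm_num

theorem sum_sq_sub_le_two_mul_norm_sub {a b q : ι → ℝ} (ha : a ∈ stdSimplex ℝ ι)
    (hq : q ∈ stdSimplex ℝ ι)
    (hmin : ∀ w ∈ stdSimplex ℝ ι, ∑ i, (a i - b i) ^ 2 ≤ ∑ i, (w i - b i) ^ 2) :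
    ∑ i, (a i - q i) ^ 2 ≤ 2 * ‖b - q‖ :=
  calc ∑ i, (a i - q i) ^ 2 ≤ ∑ i, (a i - q i) * (b i - q i) :=
        sum_sq_sub_le_sum_mul_sub_of_forall_sum_sq_le ha hq hmin
    _ ≤ ∑ i, |a i - q i| * ‖b - q‖ := sum_le_sum fun i _ => by
        have hi : |b i - q i| ≤ ‖b - q‖ := norm_le_pi_norm (b - q) i
        exact (le_abs_self _).trans ((abs_mul _ _).trans_le
          (mul_le_mul_of_nonneg_left hi (abs_nonneg _)))
    _ = (∑ i, |a i - q i|) * ‖b - q‖ := (sum_mul _ _ _).symm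
    _ ≤ 2 * ‖b - q‖ :=
        mul_le_mul_of_nonneg_right (sum_abs_sub_le_two_of_mem_stdSimplex ha hq) (norm_nonneg _)

end Simplex

theorem le_sqrt_of_forall_mul_le {m L v : ℝ} (hL : 0 < L)
    (h : ∀ t > 0, t * m ≤ L + v * t ^ 2 / 2) : m ≤ √(2 * v * L) := by
  rcases le_or_gt m 0 with hm | hm
  · exact hm.trans (sqrt_nonneg _)
  rw [Real.le_sqrt' hm]
  have := h (2 * L / m) (by positivity)
  field_simp at this
  nlinarith

section Subgaussian

variable {Ω ι : Type*} [MeasurableSpace Ω] {μ : Measure Ω} [Fintype ι]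
  {X : Ω → ι → ℝ} {v : ℝ≥0}

theorem exp_mul_norm_le_sum_exp [Nonempty ι] (x : ι → ℝ) (t : ℝ) :
    exp (t * ‖x‖) ≤ ∑ i, (exp (t * x i) + exp (-t * x i)) := by
  obtain ⟨i, hi : ‖x i‖ = ‖x‖⟩ := (IsGreatest.pi_norm x).1
  calc exp (t * ‖x‖) = exp (t * |x i|) := by rw [← hi, Real.norm_eq_abs]
    _ ≤ exp (t * x i) + exp (-t * x i) := by
        rcases abs_cases (x i) with ⟨h, -⟩ | ⟨h, -⟩ <;> rw [h]
        · exact le_add_of_nonneg_right (exp_pos _).le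
        · rw [mul_neg, ← neg_mul]
          exact le_add_of_nonneg_left (exp_pos _).le
    _ ≤ ∑ j, (exp (t * x j) + exp (-t * x j)) :=
        single_le_sum (f := fun j => exp (t * x j) + exp (-t * x j)) (fun j _ => by positivity)
          (mem_univ i)

theorem aemeasurable_norm_of_hasSubgaussianMGF (hX : ∀ i, HasSubgaussianMGF (X · i) v μ) :
    AEMeasurable (fun ω => ‖X ω‖) μ :=
  (aemeasurable_pi_lambda _ fun i => (hX i).aemeasurable).norm

theorem integrable_exp_mul_norm_of_hasSubgaussianMGF [Nonempty ι]
    (hX : ∀ i, HasSubgaussianMGF (X · i) v μ) (t : ℝ) : Integrable (fun ω => exp (t * ‖X ω‖)) μ :=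
  (integrable_finsetSum _ fun i _ =>
      ((hX i).integrable_exp_mul t).add ((hX i).integrable_exp_mul (-t))).mono'
    ((aemeasurable_norm_of_hasSubgaussianMGF hX).const_mul t).exp.aestronglyMeasurable
    (ae_of_all _ fun ω => by
      rw [norm_of_nonneg (exp_pos _).le]
      exact exp_mul_norm_le_sum_exp _ t)

theorem integrable_norm_of_hasSubgaussianMGF [Nonempty ι]
    (hX : ∀ i, HasSubgaussianMGF (X · i) v μ) :
    Integrable (fun ω => ‖X ω‖) μ :=
  (integrable_exp_mul_norm_of_hasSubgaussianMGF hX 1).mono'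
    (aemeasurable_norm_of_hasSubgaussianMGF hX).aestronglyMeasurable
    (ae_of_all _ fun ω => by
      rw [norm_norm, one_mul]
      linarith [add_one_le_exp ‖X ω‖])

theorem integral_exp_mul_norm_le [Nonempty ι] (hX : ∀ i, HasSubgaussianMGF (X · i) v μ) (t : ℝ) :
    ∫ ω, exp (t * ‖X ω‖) ∂μ ≤ 2 * Fintype.card ι * exp (v * t ^ 2 / 2) := by
  have hint (i : ι) (s : ℝ) := (hX i).integrable_exp_mul s
  calc ∫ ω, exp (t * ‖X ω‖) ∂μ
      ≤ ∫ ω, ∑ i, (exp (t * X ω i) + exp (-t * X ω i)) ∂μ :=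
        integral_mono (integrable_exp_mul_norm_of_hasSubgaussianMGF hX t)
          (integrable_finsetSum _ fun i _ => (hint i t).add (hint i (-t)))
          fun ω => exp_mul_norm_le_sum_exp _ t
    _ = ∑ i, (mgf (X · i) μ t + mgf (X · i) μ (-t)) := by
        rw [integral_finsetSum (f := fun i ω => exp (t * X ω i) + exp (-t * X ω i)) _
          fun i _ => (hint i t).add (hint i (-t))]
        exact sum_congr rfl fun i _ => integral_add (hint i t) (hint i (-t))
    _ ≤ ∑ _i : ι, (exp (v * t ^ 2 / 2) + exp (v * (-t) ^ 2 / 2)) :=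
        sum_le_sum fun i _ => add_le_add ((hX i).mgf_le t) ((hX i).mgf_le (-t))
    _ = 2 * Fintype.card ι * exp (v * t ^ 2 / 2) := by
        rw [neg_sq, sum_const, card_univ, nsmul_eq_mul]
        ring

theorem mul_integral_norm_le [Nonempty ι] [IsProbabilityMeasure μ]
    (hX : ∀ i, HasSubgaussianMGF (X · i) v μ) (t : ℝ) :
    t * ∫ ω, ‖X ω‖ ∂μ ≤ log (2 * Fintype.card ι) + v * t ^ 2 / 2 := by
  have hJensen : exp (t * ∫ ω, ‖X ω‖ ∂μ) ≤ ∫ ω, exp (t * ‖X ω‖) ∂μ := by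
    rw [← integral_const_mul]
    exact convexOn_exp.map_integral_le continuous_exp.continuousOn isClosed_univ
      (ae_of_all _ fun _ => Set.mem_univ _)
      ((integrable_norm_of_hasSubgaussianMGF hX).const_mul t)
      (integrable_exp_mul_norm_of_hasSubgaussianMGF hX t)
  rw [← log_exp (v * t ^ 2 / 2), ← log_mul (by positivity) (exp_pos _).ne',
    le_log_iff_exp_le (by positivity)]
  exact hJensen.trans (integral_exp_mul_norm_le hX t)

theorem integral_norm_le_sqrt_of_hasSubgaussianMGF [Nonempty ι] [IsProbabilityMeasure μ]
    (hX : ∀ i, HasSubgaussianMGF (X · i) v μ) :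
    ∫ ω, ‖X ω‖ ∂μ ≤ √(2 * v * log (2 * Fintype.card ι)) := by
  refine le_sqrt_of_forall_mul_le (log_pos ?_) fun t _ => mul_integral_norm_le hX t
  have := Fintype.card_pos (α := ι)
  norm_cast
  omega

end Subgaussian

theorem projected_estimator_subgaussian_general
    {Ω : Type*} [MeasurableSpace Ω] (μ : Measure Ω) [IsProbabilityMeasure μ]
    (J n : ℕ) (hJ : 2 ≤ J) (c : ℝ)
    (p : Fin J → ℝ) (hp0 : ∀ j, 0 ≤ p j) (hp1 : ∑ j, p j = 1)
    (pbar : Ω → Fin J → ℝ)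
    (hInt : ∀ j (t : ℝ), Integrable (fun ω => Real.exp (t * (pbar ω j - p j))) μ)
    (hMGF : ∀ j (t : ℝ),
        ∫ ω, Real.exp (t * (pbar ω j - p j)) ∂μ
          ≤ Real.exp (t ^ 2 * (4 * c ^ 2) / (2 * n)))
    (phat : Ω → Fin J → ℝ)
    (hphat0 : ∀ ω j, 0 ≤ phat ω j) (hphat1 : ∀ ω, ∑ j, phat ω j = 1)
    (hphatMin : ∀ ω, ∀ w : Fin J → ℝ, (∀ j, 0 ≤ w j) → (∑ j, w j = 1) →
        (∑ j, (phat ω j - pbar ω j) ^ 2) ≤ ∑ j, (w j - pbar ω j) ^ 2) :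
    ∫ ω, (∑ j, (phat ω j - p j) ^ 2) ∂μ
      ≤ Real.sqrt (256 * c ^ 2 * Real.log J / n) := by
  have : Nonempty (Fin J) := ⟨⟨0, by omega⟩⟩
  let v : ℝ≥0 := ⟨4 * c ^ 2 / n, by positivity⟩
  have hX (j : Fin J) : HasSubgaussianMGF (fun ω => (pbar ω - p) j) v μ :=
    ⟨hInt j, fun t => (hMGF j t).trans_eq <| by
      congr 1
      change _ = 4 * c ^ 2 / n * t ^ 2 / 2
      ring⟩
  have hlog : log (2 * J) ≤ 8 * log J := by
    have h2J : log 2 ≤ log J := log_le_log two_pos (by exact_mod_cast hJ)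
    rw [log_mul two_ne_zero (by positivity)]
    linarith [log_pos one_lt_two]
  have hpointwise (ω : Ω) : ∑ j, (phat ω j - p j) ^ 2 ≤ 2 * ‖pbar ω - p‖ :=
    sum_sq_sub_le_two_mul_norm_sub ⟨hphat0 ω, hphat1 ω⟩ ⟨hp0, hp1⟩
      fun w hw => hphatMin ω w hw.1 hw.2
  calc ∫ ω, (∑ j, (phat ω j - p j) ^ 2) ∂μ ≤ ∫ ω, 2 * ‖pbar ω - p‖ ∂μ :=
        integral_mono_of_nonneg (ae_of_all _ fun ω => by positivity)
          ((integrable_norm_of_hasSubgaussianMGF hX).const_mul 2) (ae_of_all _ hpointwise)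
    _ = 2 * ∫ ω, ‖pbar ω - p‖ ∂μ := integral_const_mul 2 _
    _ ≤ 2 * √(2 * (4 * c ^ 2 / n) * log (2 * J)) := by
        gcongr
        have h := integral_norm_le_sqrt_of_hasSubgaussianMGF hX
        rwa [Fintype.card_fin] at h
    _ = √(2 ^ 2 * (2 * (4 * c ^ 2 / n) * log (2 * J))) := by
        rw [sqrt_mul (sq_nonneg 2), sqrt_sq zero_le_two]
    _ ≤ √(256 * c ^ 2 * log J / n) := by
        refine sqrt_le_sqrt ?_
        calc 2 ^ 2 * (2 * (4 * c ^ 2 / n) * log (2 * J)) = 32 * (c ^ 2 / n) * log (2 * J) := by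
              ring
          _ ≤ 32 * (c ^ 2 / n) * (8 * log J) := by gcongr
          _ = 256 * c ^ 2 * log J / n := by ring

/-- accuracy of the projected estimator under coordinatewise subGaussian
noise (Theorem 4.2, high-dimensional case). If `p̄` is an unbiased estimate of
`p ∈ Simplex(J)` whose coordinates `Xⱼ = p̄ⱼ - pⱼ` satisfy the MGF bound
`E e^{t Xⱼ} ≤ e^{t² (4c²)/(2n)}` for all `t`, and `p̂` is any minimizer over the simplex of
the Euclidean distance to `p̄`, then `E ‖p̂ - p‖₂² ≤ √(256 c² ln J / n)`. -/
theorem projected_estimator_subgaussian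
    {Ω : Type*} [MeasurableSpace Ω] (μ : Measure Ω) [IsProbabilityMeasure μ]
    (J n : ℕ) (hJ : 2 ≤ J) (hn : 1 ≤ n) (c : ℝ) (hc : 0 < c)
    (p : Fin J → ℝ) (hp0 : ∀ j, 0 ≤ p j) (hp1 : ∑ j, p j = 1)
    (pbar : Ω → Fin J → ℝ) (hpbarMeas : ∀ j, Measurable (fun ω => pbar ω j))
    (hMean : ∀ j, ∫ ω, pbar ω j ∂μ = p j)
    (hInt : ∀ j (t : ℝ), Integrable (fun ω => Real.exp (t * (pbar ω j - p j))) μ)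
    (hMGF : ∀ j (t : ℝ),
        ∫ ω, Real.exp (t * (pbar ω j - p j)) ∂μ
          ≤ Real.exp (t ^ 2 * (4 * c ^ 2) / (2 * n)))
    (phat : Ω → Fin J → ℝ) (hphatMeas : ∀ j, Measurable (fun ω => phat ω j))
    (hphat0 : ∀ ω j, 0 ≤ phat ω j) (hphat1 : ∀ ω, ∑ j, phat ω j = 1)
    (hphatMin : ∀ ω, ∀ w : Fin J → ℝ, (∀ j, 0 ≤ w j) → (∑ j, w j = 1) →
        (∑ j, (phat ω j - pbar ω j) ^ 2) ≤ ∑ j, (w j - pbar ω j) ^ 2) :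
    ∫ ω, (∑ j, (phat ω j - p j) ^ 2) ∂μ
      ≤ Real.sqrt (256 * c ^ 2 * Real.log J / n) :=
  projected_estimator_subgaussian_general μ J n hJ c p hp0 hp1 pbar hInt hMGF phat hphat0 hphat1
    hphatMin
end

section
/- Least-squares projection onto a symmetric convex body (Lemma 1 of Nikolov–Talwar–Zhang, as used in the paper). Let L ⊆ ℝ^d be a nonempty closed convex set with L = −L, let y ∈ L, let z ∈ ℝ^d, and set ȳ = y + z. Let ŷ be any minimizer of ‖w − ȳ‖₂² over w ∈ L. Then ‖ŷ − y‖₂² ≤ 4 · min( ‖z‖₂² , sup_{x ∈ L} |⟨x, z⟩| ). -/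
/-!
If `ŷ` is at least as close to `ȳ = y + z` as `y` is, then expanding `‖(ŷ - y) - z‖² ≤ ‖z‖²`
gives `‖ŷ - y‖² ≤ 2 ⟪ŷ - y, z⟫`. Cauchy–Schwarz turns this into `‖ŷ - y‖ ≤ 2 ‖z‖`, while
splitting `⟪ŷ - y, z⟫ = ⟪ŷ, z⟫ - ⟪y, z⟫` bounds it by twice the support function of `L` at `z`,
since both `ŷ` and `y` lie in `L`.
-/

open scoped RealInnerProductSpace ENNReal

section

variable {E : Type*} [NormedAddCommGroup E] [InnerProductSpace ℝ E]

lemma norm_sub_sq_le_two_inner_of_norm_sub_add_le {a b z : E}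
    (h : ‖a - (b + z)‖ ^ 2 ≤ ‖z‖ ^ 2) : ‖a - b‖ ^ 2 ≤ 2 * ⟪a - b, z⟫ := by
  rw [← sub_sub, norm_sub_sq_real] at h
  linarith

lemma norm_sub_sq_le_four_mul_of_norm_sub_add_le {a b z : E}
    (h : ‖a - (b + z)‖ ^ 2 ≤ ‖z‖ ^ 2) : ‖a - b‖ ^ 2 ≤ 4 * ‖z‖ ^ 2 := by
  have hcs : ‖a - b‖ ^ 2 ≤ 2 * (‖a - b‖ * ‖z‖) :=
    (norm_sub_sq_le_two_inner_of_norm_sub_add_le h).trans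
      (mul_le_mul_of_nonneg_left (real_inner_le_norm _ _) zero_le_two)
  have hle : ‖a - b‖ ≤ 2 * ‖z‖ := by
    nlinarith [norm_nonneg (a - b), norm_nonneg z]
  nlinarith [norm_nonneg (a - b)]

lemma ofReal_two_mul_inner_sub_le {L : Set E} {a b : E} (ha : a ∈ L) (hb : b ∈ L) (z : E) :
    ENNReal.ofReal (2 * ⟪a - b, z⟫) ≤ 4 * ⨆ x ∈ L, ENNReal.ofReal |⟪x, z⟫| := by
  set S := ⨆ x ∈ L, ENNReal.ofReal |⟪x, z⟫|
  have hS : ∀ x ∈ L, ENNReal.ofReal |⟪x, z⟫| ≤ S := fun x hx => le_iSup₂_of_le x hx le_rfl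
  have hsplit : 2 * ⟪a - b, z⟫ ≤ 2 * |⟪a, z⟫| + 2 * |⟪b, z⟫| := by
    rw [inner_sub_left]
    linarith [le_abs_self ⟪a, z⟫, neg_abs_le ⟪b, z⟫]
  calc ENNReal.ofReal (2 * ⟪a - b, z⟫)
      ≤ ENNReal.ofReal (2 * |⟪a, z⟫|) + ENNReal.ofReal (2 * |⟪b, z⟫|) :=
        (ENNReal.ofReal_le_ofReal hsplit).trans ENNReal.ofReal_add_le
    _ = 2 * ENNReal.ofReal |⟪a, z⟫| + 2 * ENNReal.ofReal |⟪b, z⟫| := by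
        simp only [ENNReal.ofReal_mul zero_le_two, ENNReal.ofReal_ofNat]
    _ ≤ 2 * S + 2 * S := by gcongr <;> exact hS _ ‹_›
    _ = 4 * S := by ring

end

theorem ntz_symmetric_projection_general
    (d : ℕ) (L : Set (EuclideanSpace ℝ (Fin d)))
    (y z ybar yhat : EuclideanSpace ℝ (Fin d))
    (hy : y ∈ L) (hybar : ybar = y + z)
    (hyhatMem : yhat ∈ L)
    (hyhatMin : ∀ w ∈ L, ‖yhat - ybar‖ ^ 2 ≤ ‖w - ybar‖ ^ 2) :
    ENNReal.ofReal (‖yhat - y‖ ^ 2)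
      ≤ 4 * min (ENNReal.ofReal (‖z‖ ^ 2)) (⨆ x ∈ L, ENNReal.ofReal |⟪x, z⟫|) := by
  subst hybar
  have hclose : ‖yhat - (y + z)‖ ^ 2 ≤ ‖z‖ ^ 2 := by simpa using hyhatMin y hy
  rw [mul_min]
  refine le_min ?_ ?_
  · rw [← ENNReal.ofReal_ofNat 4, ← ENNReal.ofReal_mul zero_le_four]
    exact ENNReal.ofReal_le_ofReal (norm_sub_sq_le_four_mul_of_norm_sub_add_le hclose)
  · exact (ENNReal.ofReal_le_ofReal (norm_sub_sq_le_two_inner_of_norm_sub_add_le hclose)).trans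
      (ofReal_two_mul_inner_sub_le hyhatMem hy z)

/-- Nikolov–Talwar–Zhang, Lemma 1: least-squares projection onto a
symmetric closed convex set. If `y ∈ L`, `ȳ = y + z`, and `ŷ` minimizes `‖w - ȳ‖₂²` over
`w ∈ L`, then `‖ŷ - y‖₂² ≤ 4 min(‖z‖₂², sup_{x ∈ L} |⟨x, z⟩|)` (the supremum is taken in
`ℝ≥0∞` so that it is meaningful even when `L` is unbounded). -/
theorem ntz_symmetric_projection
    (d : ℕ) (L : Set (EuclideanSpace ℝ (Fin d)))
    (hne : L.Nonempty) (hclosed : IsClosed L) (hconv : Convex ℝ L) (hsymm : L = -L)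
    (y z ybar yhat : EuclideanSpace ℝ (Fin d))
    (hy : y ∈ L) (hybar : ybar = y + z)
    (hyhatMem : yhat ∈ L)
    (hyhatMin : ∀ w ∈ L, ‖yhat - ybar‖ ^ 2 ≤ ‖w - ybar‖ ^ 2) :
    ENNReal.ofReal (‖yhat - y‖ ^ 2)
      ≤ 4 * min (ENNReal.ofReal (‖z‖ ^ 2)) (⨆ x ∈ L, ENNReal.ofReal |⟪x, z⟫|) :=
  ntz_symmetric_projection_general d L y z ybar yhat hy hybar hyhatMem hyhatMin
end

section
/- Least-squares projection onto a symmetric convex polytope (Corollary 2.2 / Fact 2.1 of the paper). Let a₁, …, a_J ∈ ℝ^d and let L = {Σ_{j=1}^J x_j a_j : x ∈ ℝ^J, ‖x‖₁ ≤ 1} be the symmetric convex polytope with vertex set among {±a_j}. Let y ∈ L, z ∈ ℝ^d, ȳ = y + z, and let ŷ be any minimizer of ‖w − ȳ‖₂² over w ∈ L. Then ‖ŷ − y‖₂² ≤ 4 · max_{j ∈ [J]} |⟨z, a_j⟩|. -/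
open scoped RealInnerProductSpace

/-
Comparing the minimizer `ŷ` with the competitor `y ∈ L` gives `‖ŷ - y - z‖² ≤ ‖z‖²`, i.e.
`‖ŷ - y‖² ≤ 2 ⟪ŷ - y, z⟫`. A linear functional is maximized over `L` at one of the points `±aⱼ`,
so `|⟪z, w⟫| ≤ maxⱼ |⟪z, aⱼ⟫|` for both `w = ŷ` and `w = y`, whence the factor `4`.
-/

section

variable {E : Type*} [NormedAddCommGroup E] [InnerProductSpace ℝ E]

theorem abs_inner_sum_smul_le {ι : Type*} [Fintype ι] (z : E) (a : ι → E) (x : ι → ℝ) {M : ℝ}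
    (hM₀ : 0 ≤ M) (hM : ∀ j, |⟪z, a j⟫| ≤ M) (hx : ∑ j, |x j| ≤ 1) :
    |⟪z, ∑ j, x j • a j⟫| ≤ M := by
  rw [inner_sum]
  calc |∑ j, ⟪z, x j • a j⟫|
      ≤ ∑ j, |x j| * |⟪z, a j⟫| := by
        refine (Finset.abs_sum_le_sum_abs _ _).trans_eq ?_
        simp only [real_inner_smul_right, abs_mul]
    _ ≤ ∑ j, |x j| * M := by gcongr with j; exact hM j
    _ = (∑ j, |x j|) * M := (Finset.sum_mul _ _ _).symm
    _ ≤ M := mul_le_of_le_one_left hM₀ hx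

theorem sq_norm_le_two_mul_inner_of_norm_sub_le {u z : E} (h : ‖u - z‖ ≤ ‖z‖) :
    ‖u‖ ^ 2 ≤ 2 * ⟪u, z⟫ := by
  have hsq : ‖u - z‖ ^ 2 ≤ ‖z‖ ^ 2 := pow_le_pow_left₀ (norm_nonneg _) h 2
  rw [norm_sub_sq_real] at hsq
  linarith

end

/-- Corollary 2.2 / Fact 2.1: least-squares projection onto the
symmetric convex polytope `L = {∑ⱼ xⱼ aⱼ : ‖x‖₁ ≤ 1}`. If `y ∈ L`, `ȳ = y + z`, and `ŷ`
minimizes `‖w - ȳ‖₂²` over `w ∈ L`, then `‖ŷ - y‖₂² ≤ 4 maxⱼ |⟨z, aⱼ⟩|`. -/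
theorem polytope_projection
    (d J : ℕ) (hJ : 1 ≤ J)
    (a : Fin J → EuclideanSpace ℝ (Fin d))
    (L : Set (EuclideanSpace ℝ (Fin d)))
    (hL : L = {w | ∃ x : Fin J → ℝ, (∑ j, |x j|) ≤ 1 ∧ w = ∑ j, x j • a j})
    (y z ybar yhat : EuclideanSpace ℝ (Fin d))
    (hy : y ∈ L) (hybar : ybar = y + z)
    (hyhatMem : yhat ∈ L)
    (hyhatMin : ∀ w ∈ L, ‖yhat - ybar‖ ^ 2 ≤ ‖w - ybar‖ ^ 2) :
    ‖yhat - y‖ ^ 2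
      ≤ 4 * Finset.univ.sup' ⟨⟨0, hJ⟩, Finset.mem_univ _⟩ (fun j => |⟪z, a j⟫|) := by
  set M := Finset.univ.sup' ⟨⟨0, hJ⟩, Finset.mem_univ _⟩ (fun j => |⟪z, a j⟫|)
  have hM : ∀ j, |⟪z, a j⟫| ≤ M := fun j => Finset.le_sup' (fun j => |⟪z, a j⟫|) (Finset.mem_univ j)
  have hbound : ∀ w ∈ L, |⟪z, w⟫| ≤ M := by
    rw [hL]
    rintro _ ⟨x, hx, rfl⟩
    exact abs_inner_sum_smul_le z a x ((abs_nonneg _).trans (hM ⟨0, hJ⟩)) hM hx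
  have hcloser : ‖(yhat - y) - z‖ ≤ ‖z‖ := by
    have h := hyhatMin y hy
    rw [hybar, sub_add_eq_sub_sub, sub_add_cancel_left, norm_neg] at h
    exact (pow_le_pow_iff_left₀ (norm_nonneg _) (norm_nonneg _) two_ne_zero).mp h
  have hyhat := abs_le.mp (hbound yhat hyhatMem)
  have hy' := abs_le.mp (hbound y hy)
  calc ‖yhat - y‖ ^ 2 ≤ 2 * ⟪yhat - y, z⟫ := sq_norm_le_two_mul_inner_of_norm_sub_le hcloser
    _ = 2 * (⟪z, yhat⟫ - ⟪z, y⟫) := by rw [inner_sub_left, real_inner_comm yhat, real_inner_comm y]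
    _ ≤ 4 * M := by linarith
end
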